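/- Let V be a vector lattice of bounded real-valued functions on a set Y containing the constant function 1, and let L : V → ℝ be a positive linear functional with L(1) > 0 that satisfies L(g_n) → 0 whenever g_n ∈ V and g_n(y) ↓ 0 for every y ∈ Y. Then there exists a measure μ on (Y, σ(V)), where σ(V) is the smallest σ-algebra making all members of V measurable, such that L(f) = L(1)·∫ f dμ for all f ∈ V, and μ(Y) = 1. -/

import Mathlib

/-!
Daniell's construction, applied to `I = L / L 1`. The functional `I` is extended to increasing
limits `g ≤ 1` of nonnegative members of `V` by `extI g = sup {I f | f ∈ V, f ≤ g}`; the continuity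
of `L` along decreasing sequences (Dini's argument) gives `I (u n) → extI g` along every
approximating sequence `u`, which makes `extI` additive and countably subadditive. The outer
measure of `A` is the infimum of `extI g` over such `g` equal to `1` on `A`. The sets `{a < f}`,
`f ∈ V`, are Carathéodory measurable because the ramps `min (max (k (f - a)) 0) 1 ∈ V` increase to
their indicator. Finally, for `0 ≤ f ≤ 1` write `M f = ∑_{j < M} min (max (M f - j) 0) 1`: both
`I` and `∫ · dμ` of each summand lie between the measures of `{j + 1 < M f}` and `{j < M f}`, so
they differ on `f` by at most `1 / M`; an affine change reduces a bounded `f` to this case.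
-/

open MeasureTheory Filter Set Topology

structure DaniellPreintegral (Y : Type*) where
  V : Set (Y → ℝ)
  I : (Y → ℝ) → ℝ
  bounded : ∀ f ∈ V, ∃ C : ℝ, ∀ y, |f y| ≤ C
  one_mem : 1 ∈ V
  add_mem : ∀ f ∈ V, ∀ g ∈ V, f + g ∈ V
  smul_mem : ∀ (c : ℝ), ∀ f ∈ V, c • f ∈ V
  sup_mem : ∀ f ∈ V, ∀ g ∈ V, f ⊔ g ∈ V
  I_add : ∀ f ∈ V, ∀ g ∈ V, I (f + g) = I f + I g
  I_smul : ∀ (c : ℝ), ∀ f ∈ V, I (c • f) = c * I f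
  I_nonneg : ∀ f ∈ V, 0 ≤ f → 0 ≤ I f
  I_one : I 1 = 1
  tendsto_I_of_antitone : ∀ g : ℕ → Y → ℝ, (∀ n, g n ∈ V) → Antitone g →
    (∀ y, Tendsto (fun n => g n y) atTop (𝓝 0)) → Tendsto (fun n => I (g n)) atTop (𝓝 0)

def unitClamp (t : ℝ) : ℝ := min (max t 0) 1

theorem unitClamp_nonneg (t : ℝ) : 0 ≤ unitClamp t := le_min (le_max_right _ _) zero_le_one

theorem unitClamp_le_one (t : ℝ) : unitClamp t ≤ 1 := min_le_right _ _

theorem unitClamp_of_nonpos {t : ℝ} (ht : t ≤ 0) : unitClamp t = 0 := by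
  simp [unitClamp, max_eq_right ht]

theorem unitClamp_of_one_le {t : ℝ} (ht : 1 ≤ t) : unitClamp t = 1 := by
  simp [unitClamp, max_eq_left (zero_le_one.trans ht), ht]

theorem pos_of_unitClamp_pos {t : ℝ} (ht : 0 < unitClamp t) : 0 < t := by
  by_contra! h
  exact ht.ne' (unitClamp_of_nonpos h)

theorem monotone_unitClamp : Monotone unitClamp :=
  fun _ _ h => min_le_min_right _ (max_le_max_right _ h)

theorem sum_range_unitClamp_sub (M : ℕ) {t : ℝ} (ht : 0 ≤ t) :
    ∑ j ∈ Finset.range M, unitClamp (t - j) = min t M := by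
  induction M with
  | zero => simp [ht]
  | succ M ih =>
    rw [Finset.sum_range_succ, ih, unitClamp]
    push_cast
    rcases le_total t M with h | h
    · rw [max_eq_right (by linarith), min_eq_left h, min_eq_left zero_le_one,
        min_eq_left (by linarith : t ≤ M + 1), add_zero]
    · rw [min_eq_right h, max_eq_left (by linarith)]
      rcases le_total t (M + 1) with h' | h'
      · rw [min_eq_left (by linarith), min_eq_left h']; ring
      · rw [min_eq_right (by linarith), min_eq_right h']

theorem monotone_unitClamp_nat_mul (t : ℝ) : Monotone fun k : ℕ => unitClamp (k * t) := by
  intro k l hkl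
  rcases le_total t 0 with ht | ht
  · simp only [unitClamp_of_nonpos (mul_nonpos_of_nonneg_of_nonpos (Nat.cast_nonneg _) ht), le_refl]
  · exact monotone_unitClamp (mul_le_mul_of_nonneg_right (by exact_mod_cast hkl) ht)

theorem tendsto_unitClamp_nat_mul (t : ℝ) :
    Tendsto (fun k : ℕ => unitClamp (k * t)) atTop (𝓝 (if 0 < t then 1 else 0)) := by
  split_ifs with ht
  · obtain ⟨N, hN⟩ := exists_nat_ge t⁻¹
    refine tendsto_atTop_of_eventually_const (i₀ := N) fun k hk => unitClamp_of_one_le ?_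
    calc 1 = t⁻¹ * t := (inv_mul_cancel₀ ht.ne').symm
      _ ≤ k * t := mul_le_mul_of_nonneg_right (hN.trans (by exact_mod_cast hk)) ht.le
  · simp only [unitClamp_of_nonpos (mul_nonpos_of_nonneg_of_nonpos (Nat.cast_nonneg _)
      (not_lt.1 ht)), tendsto_const_nhds]

theorem eq_of_forall_nat_mul_abs_sub_le_one {a b : ℝ} (h : ∀ M : ℕ, M * |a - b| ≤ 1) :
    a = b := by
  by_contra hne
  have hpos : 0 < |a - b| := abs_pos.2 (sub_ne_zero.2 hne)
  obtain ⟨M, hM⟩ := exists_nat_gt |a - b|⁻¹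
  have := mul_lt_mul_of_pos_right hM hpos
  rw [inv_mul_cancel₀ hpos.ne'] at this
  linarith [h M]

theorem integral_le_measureReal {X : Type*} [MeasurableSpace X] {μ : Measure X}
    [IsFiniteMeasure μ] {g : X → ℝ} {A : Set X} (hA : MeasurableSet A) (hg0 : 0 ≤ g)
    (hg1 : g ≤ 1) (hgA : ∀ x, 0 < g x → x ∈ A) : ∫ x, g x ∂μ ≤ μ.real A := by
  rw [← integral_indicator_one hA]
  refine integral_mono_of_nonneg (.of_forall hg0) ((integrable_const 1).indicator hA)
    (.of_forall fun x => ?_)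
  by_cases hx : x ∈ A
  · simpa [hx] using hg1 x
  · simpa [hx] using fun h => hx (hgA x h)

theorem measureReal_le_integral {X : Type*} [MeasurableSpace X] {μ : Measure X} {g : X → ℝ}
    {B : Set X} (hB : MeasurableSet B) (hg : Integrable g μ) (hg0 : 0 ≤ g)
    (hgB : ∀ x ∈ B, g x = 1) : μ.real B ≤ ∫ x, g x ∂μ := by
  rw [← integral_indicator_one hB]
  refine integral_mono_of_nonneg (.of_forall fun x => indicator_nonneg (fun _ _ => zero_le_one) x)
    hg (.of_forall fun x => ?_)
  by_cases hx : x ∈ B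
  · simp [hx, hgB x hx]
  · simpa [hx] using hg0 x

namespace DaniellPreintegral

variable {Y : Type*} (P : DaniellPreintegral Y)

theorem const_mem (c : ℝ) : (fun _ => c) ∈ P.V := by
  simpa [Pi.smul_def] using P.smul_mem c 1 P.one_mem

theorem zero_mem : 0 ∈ P.V := P.const_mem 0

theorem neg_mem {f : Y → ℝ} (hf : f ∈ P.V) : -f ∈ P.V := by
  simpa using P.smul_mem (-1) f hf

theorem sub_mem {f g : Y → ℝ} (hf : f ∈ P.V) (hg : g ∈ P.V) : f - g ∈ P.V := by
  simpa [sub_eq_add_neg] using P.add_mem f hf (-g) (P.neg_mem hg)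

theorem inf_mem {f g : Y → ℝ} (hf : f ∈ P.V) (hg : g ∈ P.V) : f ⊓ g ∈ P.V := by
  simpa [neg_sup] using P.neg_mem (P.sup_mem _ (P.neg_mem hf) _ (P.neg_mem hg))

theorem sum_mem {ι : Type*} (s : Finset ι) {f : ι → Y → ℝ} (hf : ∀ i ∈ s, f i ∈ P.V) :
    ∑ i ∈ s, f i ∈ P.V := by
  classical
  induction s using Finset.induction_on with
  | empty => simpa using P.zero_mem
  | insert a s ha ih =>
    rw [Finset.sum_insert ha]
    exact P.add_mem _ (hf a (s.mem_insert_self a)) _ (ih fun i hi => hf i (s.mem_insert_of_mem hi))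

theorem unitClamp_comp_mem {f : Y → ℝ} (hf : f ∈ P.V) (c d : ℝ) :
    (fun y => unitClamp (c * f y - d)) ∈ P.V := by
  have h := P.inf_mem (P.sup_mem _ (P.sub_mem (P.smul_mem c f hf) (P.const_mem d)) _ P.zero_mem)
    P.one_mem
  simpa [unitClamp, Pi.inf_def, Pi.sup_def] using h

theorem I_zero : P.I 0 = 0 := by
  simpa using P.I_smul 0 1 P.one_mem

theorem I_sub {f g : Y → ℝ} (hf : f ∈ P.V) (hg : g ∈ P.V) : P.I (f - g) = P.I f - P.I g := by
  have h := P.I_add _ (P.sub_mem hf hg) g hg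
  rw [sub_add_cancel] at h
  linarith

theorem I_mono {f g : Y → ℝ} (hf : f ∈ P.V) (hg : g ∈ P.V) (hfg : f ≤ g) : P.I f ≤ P.I g := by
  have h := P.I_nonneg _ (P.sub_mem hg hf) (sub_nonneg.2 hfg)
  rw [P.I_sub hg hf] at h
  linarith

theorem I_const (c : ℝ) : P.I (fun _ => c) = c := by
  simpa [Pi.smul_def, P.I_one] using P.I_smul c 1 P.one_mem

theorem I_sum {ι : Type*} (s : Finset ι) {f : ι → Y → ℝ} (hf : ∀ i ∈ s, f i ∈ P.V) :
    P.I (∑ i ∈ s, f i) = ∑ i ∈ s, P.I (f i) := by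
  classical
  induction s using Finset.induction_on with
  | empty => simpa using P.I_zero
  | insert a s ha ih =>
    have hs : ∀ i ∈ s, f i ∈ P.V := fun i hi => hf i (s.mem_insert_of_mem hi)
    rw [Finset.sum_insert ha, Finset.sum_insert ha,
      P.I_add _ (hf a (s.mem_insert_self a)) _ (P.sum_mem s hs), ih hs]

/-- Dini's argument: the defect `(f - u n)⁺` decreases to `0`, hence so does its integral. -/
theorem exists_I_le_I_add {f : Y → ℝ} (hf : f ∈ P.V) {u : ℕ → Y → ℝ} (hu : ∀ n, u n ∈ P.V)
    (hmono : Monotone u) {g : Y → ℝ} (hlim : ∀ y, Tendsto (fun n => u n y) atTop (𝓝 (g y)))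
    (hfg : f ≤ g) {ε : ℝ} (hε : 0 < ε) : ∃ n, P.I f ≤ P.I (u n) + ε := by
  set d : ℕ → Y → ℝ := fun n => (f - u n) ⊔ 0
  have hd : ∀ n, d n ∈ P.V := fun n => P.sup_mem _ (P.sub_mem hf (hu n)) _ P.zero_mem
  have hanti : Antitone d := fun m n hmn y =>
    max_le_max_right _ (sub_le_sub_left (hmono hmn y) _)
  have hd0 : ∀ y, Tendsto (fun n => d n y) atTop (𝓝 0) := fun y => by
    have h := ((tendsto_const_nhds (x := f y)).sub (hlim y)).max (tendsto_const_nhds (x := 0))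
    rwa [max_eq_right (sub_nonpos.2 (hfg y))] at h
  obtain ⟨n, hn⟩ := ((P.tendsto_I_of_antitone d hd hanti hd0).eventually
    (gt_mem_nhds hε)).exists
  refine ⟨n, ?_⟩
  have hle : f ≤ u n + d n := fun y => by
    change f y ≤ u n y + max (f y - u n y) 0
    linarith [le_max_left (f y - u n y) 0]
  have := P.I_mono hf (P.add_mem _ (hu n) _ (hd n)) hle
  rw [P.I_add _ (hu n) _ (hd n)] at this
  linarith

structure IsMonoApprox (u : ℕ → Y → ℝ) (g : Y → ℝ) : Prop where
  mem : ∀ n, u n ∈ P.V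
  mono : Monotone u
  nonneg : ∀ n, 0 ≤ u n
  le_one : g ≤ 1
  tendsto : ∀ y, Tendsto (fun n => u n y) atTop (𝓝 (g y))

/-- Daniell's extension of `I` from `V` to the increasing limits of members of `V`. -/
noncomputable def extI (g : Y → ℝ) : ℝ := sSup (P.I '' {f | f ∈ P.V ∧ f ≤ g})

theorem bddAbove_I_image {g : Y → ℝ} (hg : g ≤ 1) : BddAbove (P.I '' {f | f ∈ P.V ∧ f ≤ g}) :=
  ⟨1, by rintro _ ⟨f, ⟨hf, hfg⟩, rfl⟩; exact P.I_one ▸ P.I_mono hf P.one_mem (hfg.trans hg)⟩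

theorem le_extI {f g : Y → ℝ} (hf : f ∈ P.V) (hfg : f ≤ g) (hg : g ≤ 1) : P.I f ≤ P.extI g :=
  le_csSup (P.bddAbove_I_image hg) ⟨f, ⟨hf, hfg⟩, rfl⟩

theorem extI_nonneg {g : Y → ℝ} (hg0 : 0 ≤ g) (hg1 : g ≤ 1) : 0 ≤ P.extI g :=
  P.I_zero ▸ P.le_extI P.zero_mem hg0 hg1

namespace IsMonoApprox

variable {P} {u v : ℕ → Y → ℝ} {g h : Y → ℝ}

theorem le (hu : P.IsMonoApprox u g) (n : ℕ) : u n ≤ g := fun y =>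
  Monotone.ge_of_tendsto (fun _ _ hmn => hu.mono hmn y) (hu.tendsto y) n

theorem limit_nonneg (hu : P.IsMonoApprox u g) : 0 ≤ g :=
  (hu.nonneg 0).trans (hu.le 0)

theorem const {f : Y → ℝ} (hf : f ∈ P.V) (hf0 : 0 ≤ f) (hf1 : f ≤ 1) :
    P.IsMonoApprox (fun _ => f) f :=
  ⟨fun _ => hf, monotone_const, fun _ => hf0, hf1, fun _ => tendsto_const_nhds⟩

theorem inf (hu : P.IsMonoApprox u g) (hv : P.IsMonoApprox v h) :
    P.IsMonoApprox (u ⊓ v) (g ⊓ h) where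
  mem n := P.inf_mem (hu.mem n) (hv.mem n)
  mono := hu.mono.inf hv.mono
  nonneg n := le_inf (hu.nonneg n) (hv.nonneg n)
  le_one := inf_le_left.trans hu.le_one
  tendsto y := (hu.tendsto y).min (hv.tendsto y)

theorem posPart_sub (hu : P.IsMonoApprox u g) {φ : Y → ℝ} (hφ : φ ∈ P.V) (hφ0 : 0 ≤ φ) :
    P.IsMonoApprox (fun n => (u n - φ) ⊔ 0) ((g - φ) ⊔ 0) where
  mem n := P.sup_mem _ (P.sub_mem (hu.mem n) hφ) _ P.zero_mem
  mono _ _ hmn y := max_le_max_right 0 (sub_le_sub_right (hu.mono hmn y) _)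
  nonneg _ := le_sup_right
  le_one y := max_le (by simpa using (sub_le_self (g y) (hφ0 y)).trans (hu.le_one y)) zero_le_one
  tendsto y := ((hu.tendsto y).sub tendsto_const_nhds).max tendsto_const_nhds

theorem iSup {u : ℕ → ℕ → Y → ℝ} {g : ℕ → Y → ℝ} (hu : ∀ k, P.IsMonoApprox (u k) (g k)) :
    P.IsMonoApprox (fun n => partialSups (fun k => u k n) n) (fun y => ⨆ k, g k y) := by
  have hbdd : ∀ y, BddAbove (range fun k => g k y) := fun y =>
    ⟨1, by rintro _ ⟨k, rfl⟩; exact (hu k).le_one y⟩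
  have hle : ∀ n, partialSups (fun k => u k n) n ≤ fun y => ⨆ k, g k y := fun n =>
    partialSups_le _ _ _ fun k _ y => ((hu k).le n y).trans (le_ciSup (hbdd y) k)
  have hmono : Monotone fun n => partialSups (fun k => u k n) n := fun m n hmn =>
    partialSups_le _ _ _ fun k hk =>
      ((hu k).mono hmn).trans (le_partialSups_of_le (fun k => u k n) (hk.trans hmn))
  refine ⟨fun n => ?_, hmono,
    fun n => ((hu 0).nonneg n).trans (le_partialSups_of_le (fun k => u k n) n.zero_le),
    fun y => ciSup_le fun k => (hu k).le_one y, fun y => ?_⟩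
  · rw [partialSups_apply]
    exact Finset.sup'_mem P.V (fun a ha b hb => P.sup_mem a ha b hb) _ _ _ fun k _ => (hu k).mem n
  refine tendsto_atTop_isLUB (fun m n hmn => hmono hmn y) ⟨?_, fun b hb => ciSup_le fun k => ?_⟩
  · rintro _ ⟨n, rfl⟩
    exact hle n y
  refine le_of_tendsto ((hu k).tendsto y) ?_
  filter_upwards [eventually_ge_atTop k] with n hkn
  exact (le_partialSups_of_le (fun k => u k n) hkn y).trans (hb ⟨n, rfl⟩)

theorem I_le_extI (hu : P.IsMonoApprox u g) (n : ℕ) : P.I (u n) ≤ P.extI g :=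
  P.le_extI (hu.mem n) (hu.le n) hu.le_one

theorem tendsto_I (hu : P.IsMonoApprox u g) :
    Tendsto (fun n => P.I (u n)) atTop (𝓝 (P.extI g)) := by
  refine tendsto_atTop_isLUB (fun m n hmn => P.I_mono (hu.mem m) (hu.mem n) (hu.mono hmn))
    ⟨?_, fun b hb => ?_⟩
  · rintro _ ⟨n, rfl⟩
    exact hu.I_le_extI n
  refine csSup_le ⟨P.I 0, 0, ⟨P.zero_mem, hu.limit_nonneg⟩, rfl⟩ ?_
  rintro _ ⟨f, ⟨hf, hfg⟩, rfl⟩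
  refine le_of_forall_pos_le_add fun ε hε => ?_
  obtain ⟨n, hn⟩ := P.exists_I_le_I_add hf hu.mem hu.mono hu.tendsto hfg hε
  linarith [hb ⟨n, rfl⟩]

end IsMonoApprox

theorem extI_eq_I {f : Y → ℝ} (hf : f ∈ P.V) (hf0 : 0 ≤ f) (hf1 : f ≤ 1) : P.extI f = P.I f :=
  tendsto_nhds_unique (IsMonoApprox.const hf hf0 hf1).tendsto_I tendsto_const_nhds

theorem extI_inf_add_extI_posPart_sub {u : ℕ → Y → ℝ} {g φ : Y → ℝ} (hu : P.IsMonoApprox u g)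
    (hφ : φ ∈ P.V) (hφ0 : 0 ≤ φ) (hφ1 : φ ≤ 1) :
    P.extI (g ⊓ φ) + P.extI ((g - φ) ⊔ 0) = P.extI g := by
  refine tendsto_nhds_unique ((hu.inf (.const hφ hφ0 hφ1)).tendsto_I.add
    (hu.posPart_sub hφ hφ0).tendsto_I) ?_
  convert hu.tendsto_I using 2 with n
  change P.I (u n ⊓ φ) + _ = _
  rw [← P.I_add _ (P.inf_mem (hu.mem n) hφ) _ (P.sup_mem _ (P.sub_mem (hu.mem n) hφ) _ P.zero_mem)]
  congr 1
  ext y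
  change min (u n y) (φ y) + max (u n y - φ y) 0 = u n y
  rcases le_total (u n y) (φ y) with h | h
  · rw [min_eq_left h, max_eq_right (by linarith), add_zero]
  · rw [min_eq_right h, max_eq_left (by linarith)]; ring

theorem ofReal_extI_iSup_le {u : ℕ → ℕ → Y → ℝ} {g : ℕ → Y → ℝ}
    (hu : ∀ k, P.IsMonoApprox (u k) (g k)) :
    ENNReal.ofReal (P.extI fun y => ⨆ k, g k y) ≤ ∑' k, ENNReal.ofReal (P.extI (g k)) := by
  refine le_of_tendsto'
    ((ENNReal.continuous_ofReal.tendsto _).comp (IsMonoApprox.iSup hu).tendsto_I) fun n => ?_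
  have hsum : partialSups (fun k => u k n) n ≤ ∑ k ∈ Finset.range (n + 1), u k n :=
    partialSups_le _ _ _ fun j hj => Finset.single_le_sum (fun k _ => (hu k).nonneg n)
      (Finset.mem_range_succ_iff.2 hj)
  have hmem : ∀ k ∈ Finset.range (n + 1), u k n ∈ P.V := fun k _ => (hu k).mem n
  calc ENNReal.ofReal (P.I (partialSups (fun k => u k n) n))
      ≤ ENNReal.ofReal (∑ k ∈ Finset.range (n + 1), P.extI (g k)) := by
        refine ENNReal.ofReal_le_ofReal ?_
        calc P.I (partialSups (fun k => u k n) n) ≤ P.I (∑ k ∈ Finset.range (n + 1), u k n) :=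
              P.I_mono ((IsMonoApprox.iSup hu).mem n) (P.sum_mem _ hmem) hsum
          _ ≤ ∑ k ∈ Finset.range (n + 1), P.extI (g k) := by
              rw [P.I_sum _ hmem]
              exact Finset.sum_le_sum fun k _ => (hu k).I_le_extI n
    _ = ∑ k ∈ Finset.range (n + 1), ENNReal.ofReal (P.extI (g k)) :=
        ENNReal.ofReal_sum_of_nonneg fun k _ => P.extI_nonneg (hu k).limit_nonneg (hu k).le_one
    _ ≤ ∑' k, ENNReal.ofReal (P.extI (g k)) := ENNReal.sum_le_tsum _

structure IsCover (A : Set Y) (g : Y → ℝ) : Prop where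
  exists_approx : ∃ u, P.IsMonoApprox u g
  eq_one : ∀ y ∈ A, g y = 1

noncomputable def outer (A : Set Y) : ℝ := sInf (P.extI '' {g | P.IsCover A g})

theorem isCover_one (A : Set Y) : P.IsCover A 1 :=
  ⟨⟨_, .const P.one_mem zero_le_one le_rfl⟩, fun _ _ => rfl⟩

theorem IsCover.extI_nonneg {A : Set Y} {g : Y → ℝ} (hg : P.IsCover A g) : 0 ≤ P.extI g := by
  obtain ⟨u, hu⟩ := hg.exists_approx
  exact P.extI_nonneg hu.limit_nonneg hu.le_one

theorem outer_le_extI {A : Set Y} {g : Y → ℝ} (hg : P.IsCover A g) : P.outer A ≤ P.extI g := by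
  refine csInf_le ⟨0, ?_⟩ ⟨g, hg, rfl⟩
  rintro _ ⟨g, hg, rfl⟩
  exact hg.extI_nonneg P

theorem nonempty_extI_image_isCover (A : Set Y) : (P.extI '' {g | P.IsCover A g}).Nonempty :=
  ⟨_, _, P.isCover_one A, rfl⟩

theorem le_outer {A : Set Y} {b : ℝ} (h : ∀ g, P.IsCover A g → b ≤ P.extI g) : b ≤ P.outer A :=
  le_csInf (P.nonempty_extI_image_isCover A) <| by rintro _ ⟨g, hg, rfl⟩; exact h g hg

theorem exists_isCover_extI_lt {A : Set Y} {b : ℝ} (h : P.outer A < b) :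
    ∃ g, P.IsCover A g ∧ P.extI g < b := by
  obtain ⟨_, ⟨g, hg, rfl⟩, hgb⟩ := exists_lt_of_csInf_lt (P.nonempty_extI_image_isCover A) h
  exact ⟨g, hg, hgb⟩

theorem outer_nonneg (A : Set Y) : 0 ≤ P.outer A :=
  P.le_outer fun _ hg => hg.extI_nonneg P

theorem outer_empty : P.outer ∅ = 0 := by
  refine le_antisymm ?_ (P.outer_nonneg ∅)
  have hcover : P.IsCover ∅ 0 := ⟨⟨_, .const P.zero_mem le_rfl zero_le_one⟩, fun _ h => h.elim⟩
  have h := P.outer_le_extI hcover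
  rwa [P.extI_eq_I P.zero_mem le_rfl zero_le_one, P.I_zero] at h

theorem outer_mono {A B : Set Y} (hAB : A ⊆ B) : P.outer A ≤ P.outer B :=
  P.le_outer fun _ hg => P.outer_le_extI ⟨hg.exists_approx, fun y hy => hg.eq_one y (hAB hy)⟩

theorem outer_univ : P.outer univ = 1 := by
  have h1 : P.extI 1 = 1 := by rw [P.extI_eq_I P.one_mem zero_le_one le_rfl, P.I_one]
  refine le_antisymm (h1 ▸ P.outer_le_extI (P.isCover_one univ)) (P.le_outer fun g hg => ?_)
  rw [show g = 1 from funext fun y => hg.eq_one y (mem_univ y), h1]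

theorem outer_le_one (A : Set Y) : P.outer A ≤ 1 :=
  P.outer_univ ▸ P.outer_mono (subset_univ A)

theorem I_le_outer {f : Y → ℝ} (hf : f ∈ P.V) (hf1 : f ≤ 1) {A : Set Y}
    (hA : ∀ y, 0 < f y → y ∈ A) : P.I f ≤ P.outer A := by
  refine P.le_outer fun g hg => ?_
  obtain ⟨u, hu⟩ := hg.exists_approx
  refine P.le_extI hf (fun y => ?_) hu.le_one
  rcases lt_or_ge 0 (f y) with hy | hy
  · exact (hg.eq_one y (hA y hy)).symm ▸ hf1 y
  · exact hy.trans (hu.limit_nonneg y)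

theorem outer_le_I {f : Y → ℝ} (hf : f ∈ P.V) (hf0 : 0 ≤ f) (hf1 : f ≤ 1) {B : Set Y}
    (hB : ∀ y ∈ B, f y = 1) : P.outer B ≤ P.I f :=
  P.extI_eq_I hf hf0 hf1 ▸ P.outer_le_extI ⟨⟨_, .const hf hf0 hf1⟩, hB⟩

theorem ofReal_outer_iUnion_le (A : ℕ → Set Y) :
    ENNReal.ofReal (P.outer (⋃ k, A k)) ≤ ∑' k, ENNReal.ofReal (P.outer (A k)) := by
  refine ENNReal.le_of_forall_pos_le_add fun ε hε _ => ?_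
  obtain ⟨δ, hδ, hδε⟩ := ENNReal.exists_pos_sum_of_countable (ENNReal.coe_ne_zero.2 hε.ne') ℕ
  choose g hg hgδ using fun k => P.exists_isCover_extI_lt (lt_add_of_pos_right _ (hδ k))
  choose u hu using fun k => (hg k).exists_approx
  have hcover : P.IsCover (⋃ k, A k) fun y => ⨆ k, g k y := by
    refine ⟨⟨_, IsMonoApprox.iSup hu⟩, fun y hy => ?_⟩
    obtain ⟨i, hi⟩ := mem_iUnion.1 hy
    refine le_antisymm (ciSup_le fun k => (hu k).le_one y) ?_
    calc (1 : ℝ) = g i y := ((hg i).eq_one y hi).symm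
      _ ≤ ⨆ k, g k y :=
        le_ciSup (f := fun k => g k y) ⟨1, by rintro _ ⟨k, rfl⟩; exact (hu k).le_one y⟩ i
  calc ENNReal.ofReal (P.outer (⋃ k, A k))
      ≤ ENNReal.ofReal (P.extI fun y => ⨆ k, g k y) :=
        ENNReal.ofReal_le_ofReal (P.outer_le_extI hcover)
    _ ≤ ∑' k, ENNReal.ofReal (P.extI (g k)) := P.ofReal_extI_iSup_le hu
    _ ≤ ∑' k, (ENNReal.ofReal (P.outer (A k)) + δ k) := by
        refine ENNReal.tsum_le_tsum fun k => ?_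
        rw [← ENNReal.ofReal_coe_nnreal, ← ENNReal.ofReal_add (P.outer_nonneg _) (δ k).coe_nonneg]
        exact ENNReal.ofReal_le_ofReal (hgδ k).le
    _ ≤ ∑' k, ENNReal.ofReal (P.outer (A k)) + ε := by
        rw [ENNReal.tsum_add]
        gcongr

/-- A cover `g` of `A` splits, through the ramps `unitClamp (k * (f - a)) ↑ 1_{a < f}`, into
covers `g ⊓ 1_{a < f}` of `A ∩ {a < f}` and `(g - ramp)⁺` of `A \ {a < f}`. -/
theorem outer_inter_add_outer_diff_le {f : Y → ℝ} (hf : f ∈ P.V) (a : ℝ) (A : Set Y) :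
    P.outer (A ∩ {y | a < f y}) + P.outer (A \ {y | a < f y}) ≤ P.outer A := by
  set φ : ℕ → Y → ℝ := fun k y => unitClamp (k * f y - k * a)
  set e : Y → ℝ := fun y => if 0 < f y - a then 1 else 0
  have hφ_eq : ∀ k y, φ k y = unitClamp (k * (f y - a)) := fun k y => by simp only [φ, mul_sub]
  have hφ : P.IsMonoApprox φ e :=
    { mem k := P.unitClamp_comp_mem hf k (k * a)
      mono k l hkl y := by simpa only [hφ_eq] using monotone_unitClamp_nat_mul (f y - a) hkl
      nonneg k y := unitClamp_nonneg _
      le_one y := by simp only [e]; split_ifs <;> norm_num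
      tendsto y := by simpa only [hφ_eq] using tendsto_unitClamp_nat_mul (f y - a) }
  refine P.le_outer fun g hg => le_of_forall_pos_le_add fun ε hε => ?_
  obtain ⟨u, hu⟩ := hg.exists_approx
  obtain ⟨k, hk⟩ := ((hu.inf hφ).tendsto_I.eventually (lt_mem_nhds (sub_lt_self _ hε))).exists
  have hφk1 : φ k ≤ 1 := fun y => unitClamp_le_one _
  have h_inter : P.outer (A ∩ {y | a < f y}) ≤ P.extI (g ⊓ e) :=
    P.outer_le_extI ⟨⟨_, hu.inf hφ⟩, fun y hy => by
      simp [e, hg.eq_one y hy.1, show a < f y from hy.2]⟩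
  have h_diff : P.outer (A \ {y | a < f y}) ≤ P.extI ((g - φ k) ⊔ 0) :=
    P.outer_le_extI ⟨⟨_, hu.posPart_sub (hφ.mem k) (hφ.nonneg k)⟩, fun y hy => by
      have hφ0 : φ k y = 0 := by
        rw [hφ_eq]
        exact unitClamp_of_nonpos (mul_nonpos_of_nonneg_of_nonpos (Nat.cast_nonneg _)
          (sub_nonpos.2 (not_lt.1 hy.2)))
      simp [hg.eq_one y hy.1, hφ0]⟩
  have h_approx : P.I ((u ⊓ φ) k) ≤ P.extI (g ⊓ φ k) :=
    P.le_extI ((hu.inf hφ).mem k) (inf_le_inf_right _ (hu.le k)) (inf_le_right.trans hφk1)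
  have h_split := P.extI_inf_add_extI_posPart_sub hu (hφ.mem k) (hφ.nonneg k) hφk1
  linarith

noncomputable def outerMeasure : OuterMeasure Y where
  measureOf A := ENNReal.ofReal (P.outer A)
  empty := by simp [P.outer_empty]
  mono hAB := ENNReal.ofReal_le_ofReal (P.outer_mono hAB)
  iUnion_nat A _ := P.ofReal_outer_iUnion_le A

theorem outerMeasure_apply (A : Set Y) : P.outerMeasure A = ENNReal.ofReal (P.outer A) := rfl

theorem iSup_comap_le_caratheodory :
    ⨆ f ∈ P.V, MeasurableSpace.comap f (borel ℝ) ≤ P.outerMeasure.caratheodory := by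
  refine iSup₂_le fun f hf => ?_
  rw [borel_eq_generateFrom_Ioi, MeasurableSpace.comap_generateFrom]
  refine MeasurableSpace.generateFrom_le ?_
  rintro _ ⟨_, ⟨a, rfl⟩, rfl⟩
  refine (OuterMeasure.isCaratheodory_iff_le _).2 fun A => ?_
  simp only [P.outerMeasure_apply, ← ENNReal.ofReal_add (P.outer_nonneg _) (P.outer_nonneg _)]
  exact ENNReal.ofReal_le_ofReal (P.outer_inter_add_outer_diff_le hf a A)

section Measure

variable [MeasurableSpace Y] (hle : ‹MeasurableSpace Y› ≤ P.outerMeasure.caratheodory)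

noncomputable def measure : Measure Y := P.outerMeasure.toMeasure hle

theorem measureReal_eq_outer {A : Set Y} (hA : MeasurableSet A) :
    (P.measure hle).real A = P.outer A := by
  rw [measureReal_def, measure, toMeasure_apply _ hle hA, outerMeasure_apply,
    ENNReal.toReal_ofReal (P.outer_nonneg A)]

instance isProbabilityMeasure_measure : IsProbabilityMeasure (P.measure hle) := by
  refine ⟨?_⟩
  rw [measure, toMeasure_apply _ hle .univ, outerMeasure_apply, P.outer_univ, ENNReal.ofReal_one]

variable (hmeas : ∀ f ∈ P.V, Measurable f)
include hmeas

theorem integrable_of_mem {f : Y → ℝ} (hf : f ∈ P.V) : Integrable f (P.measure hle) := by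
  obtain ⟨C, hC⟩ := P.bounded f hf
  exact .of_bound (hmeas f hf).aestronglyMeasurable C (.of_forall hC)

theorem abs_I_sub_integral_le {g : Y → ℝ} (hg : g ∈ P.V) (hg0 : 0 ≤ g) (hg1 : g ≤ 1)
    {A B : Set Y} (hA : MeasurableSet A) (hB : MeasurableSet B) (hgA : ∀ y, 0 < g y → y ∈ A)
    (hgB : ∀ y ∈ B, g y = 1) : |P.I g - ∫ y, g y ∂P.measure hle| ≤ P.outer A - P.outer B := by
  have hI_le := P.I_le_outer hg hg1 hgA
  have hI_ge := P.outer_le_I hg hg0 hg1 hgB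
  have hint_le := integral_le_measureReal (μ := P.measure hle) hA hg0 hg1 hgA
  have hint_ge := measureReal_le_integral hB (P.integrable_of_mem hle hmeas hg) hg0 hgB
  rw [P.measureReal_eq_outer hle hA] at hint_le
  rw [P.measureReal_eq_outer hle hB] at hint_ge
  rw [abs_sub_le_iff]
  constructor <;> linarith

theorem I_eq_integral_of_nonneg_of_le_one {f : Y → ℝ} (hf : f ∈ P.V) (hf0 : 0 ≤ f)
    (hf1 : f ≤ 1) : P.I f = ∫ y, f y ∂P.measure hle := by
  refine eq_of_forall_nat_mul_abs_sub_le_one fun M => ?_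
  set g : ℕ → Y → ℝ := fun j y => unitClamp (M * f y - j)
  set A : ℕ → Set Y := fun j => {y | (j : ℝ) < M * f y}
  have hg : ∀ j, g j ∈ P.V := fun j => P.unitClamp_comp_mem hf M j
  have hsum : ∀ y, ∑ j ∈ Finset.range M, g j y = M * f y := fun y => by
    rw [sum_range_unitClamp_sub M (mul_nonneg M.cast_nonneg (hf0 y)),
      min_eq_left (mul_le_of_le_one_right M.cast_nonneg (hf1 y))]
  have hI : M * P.I f = ∑ j ∈ Finset.range M, P.I (g j) := by
    rw [← P.I_sum _ fun j _ => hg j, ← P.I_smul _ _ hf]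
    congr 1
    ext y
    simp [hsum y]
  have hint : M * ∫ y, f y ∂P.measure hle = ∑ j ∈ Finset.range M, ∫ y, g j y ∂P.measure hle := by
    rw [← integral_finsetSum _ fun j _ => P.integrable_of_mem hle hmeas (hg j),
      ← integral_const_mul]
    simp only [hsum]
  have hlayer : ∀ j,
      |P.I (g j) - ∫ y, g j y ∂P.measure hle| ≤ P.outer (A j) - P.outer (A (j + 1)) :=
    fun j => P.abs_I_sub_integral_le hle hmeas (hg j) (fun y => unitClamp_nonneg _)
      (fun y => unitClamp_le_one _) (measurableSet_lt measurable_const ((hmeas f hf).const_mul _))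
      (measurableSet_lt measurable_const ((hmeas f hf).const_mul _))
      (fun y hy => by
        have := pos_of_unitClamp_pos hy
        change (j : ℝ) < M * f y
        linarith)
      (fun y hy => by
        change ((j + 1 : ℕ) : ℝ) < M * f y at hy
        push_cast at hy
        exact unitClamp_of_one_le (by linarith))
  calc M * |P.I f - ∫ y, f y ∂P.measure hle|
      = |∑ j ∈ Finset.range M, (P.I (g j) - ∫ y, g j y ∂P.measure hle)| := by
        rw [Finset.sum_sub_distrib, ← hI, ← hint, ← mul_sub, abs_mul, Nat.abs_cast]
    _ ≤ ∑ j ∈ Finset.range M, (P.outer (A j) - P.outer (A (j + 1))) :=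
        (Finset.abs_sum_le_sum_abs _ _).trans (Finset.sum_le_sum fun j _ => hlayer j)
    _ = P.outer (A 0) - P.outer (A M) := Finset.sum_range_sub' _ M
    _ ≤ 1 := by linarith [P.outer_le_one (A 0), P.outer_nonneg (A M)]

theorem I_eq_integral {f : Y → ℝ} (hf : f ∈ P.V) : P.I f = ∫ y, f y ∂P.measure hle := by
  obtain ⟨C, hC⟩ := P.bounded f hf
  set c := max C 1
  have hc : 0 < c := lt_max_of_lt_right one_pos
  have hfc : ∀ y, |f y| ≤ c := fun y => (hC y).trans (le_max_left C 1)
  set g : Y → ℝ := (2 * c)⁻¹ • (f + fun _ => c)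
  have hg : g ∈ P.V := P.smul_mem _ _ (P.add_mem _ hf _ (P.const_mem c))
  have hg0 : 0 ≤ g := fun y => by
    have := (abs_le.1 (hfc y)).1
    change 0 ≤ (2 * c)⁻¹ * (f y + c)
    exact mul_nonneg (by positivity) (by linarith)
  have hg1 : g ≤ 1 := fun y => by
    have := (abs_le.1 (hfc y)).2
    change (2 * c)⁻¹ * (f y + c) ≤ 1
    rw [inv_mul_le_iff₀ (by positivity)]
    linarith
  have hfg : f = (2 * c) • g - fun _ => c := by
    ext y
    simp only [g, Pi.sub_apply, Pi.smul_apply, Pi.add_apply, smul_eq_mul]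
    field_simp
    ring
  rw [hfg, P.I_sub (P.smul_mem _ _ hg) (P.const_mem c), P.I_smul _ _ hg, P.I_const,
    P.I_eq_integral_of_nonneg_of_le_one hle hmeas hg hg0 hg1]
  simp only [Pi.sub_apply, Pi.smul_apply, smul_eq_mul]
  rw [integral_sub ((P.integrable_of_mem hle hmeas hg).const_mul _) (integrable_const c),
    integral_const_mul, integral_const, probReal_univ, one_smul]

end Measure

end DaniellPreintegral

theorem stmt19_general {Y : Type*} (V : Set (Y → ℝ)) (L : (Y → ℝ) → ℝ)
    (hbd : ∀ f ∈ V, ∃ C : ℝ, ∀ y, |f y| ≤ C)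
    (h1 : (fun _ => (1 : ℝ)) ∈ V)
    (haddV : ∀ f ∈ V, ∀ g ∈ V, f + g ∈ V)
    (hsmulV : ∀ (c : ℝ), ∀ f ∈ V, c • f ∈ V)
    (hmaxV : ∀ f ∈ V, ∀ g ∈ V, f ⊔ g ∈ V)
    (hLadd : ∀ f ∈ V, ∀ g ∈ V, L (f + g) = L f + L g)
    (hLsmul : ∀ (c : ℝ), ∀ f ∈ V, L (c • f) = c * L f)
    (hLpos : ∀ f ∈ V, (∀ y, 0 ≤ f y) → 0 ≤ L f)
    (hL1 : 0 < L (fun _ => (1 : ℝ)))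
    (hLcont : ∀ g : ℕ → Y → ℝ, (∀ n, g n ∈ V) →
      (∀ y, Antitone fun n => g n y) →
      (∀ y, Filter.Tendsto (fun n => g n y) Filter.atTop (nhds 0)) →
      Filter.Tendsto (fun n => L (g n)) Filter.atTop (nhds 0)) :
    letI m : MeasurableSpace Y := ⨆ f ∈ V, MeasurableSpace.comap f (borel ℝ)
    ∃ μ : Measure Y, IsProbabilityMeasure μ ∧
      ∀ f ∈ V, L f = L (fun _ => (1 : ℝ)) * ∫ y, f y ∂μ := by
  let P : DaniellPreintegral Y :=
    { V, I := fun f => L f / L 1, bounded := hbd, one_mem := h1, add_mem := haddV,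
      smul_mem := hsmulV, sup_mem := hmaxV
      I_add := fun f hf g hg => by simp only [hLadd f hf g hg, add_div]
      I_smul := fun c f hf => by simp only [hLsmul c f hf, mul_div_assoc]
      I_nonneg := fun f hf hf0 => div_nonneg (hLpos f hf hf0) hL1.le
      I_one := div_self hL1.ne'
      tendsto_I_of_antitone := fun g hg hanti hg0 => by
        simpa using (hLcont g hg (fun y _ _ hmn => hanti hmn y) hg0).div_const (L 1) }
  let _ : MeasurableSpace Y := ⨆ f ∈ V, MeasurableSpace.comap f (borel ℝ)
  have hmeas : ∀ f ∈ P.V, Measurable f := fun f hf =>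
    measurable_iff_comap_le.2
      (le_iSup₂ (f := fun f (_ : f ∈ V) => MeasurableSpace.comap f (borel ℝ)) f hf)
  refine ⟨P.measure P.iSup_comap_le_caratheodory, inferInstance, fun f hf => ?_⟩
  rw [← P.I_eq_integral _ hmeas hf]
  exact (mul_div_cancel₀ _ hL1.ne').symm

theorem stmt19 {Y : Type*} (V : Set (Y → ℝ)) (L : (Y → ℝ) → ℝ)
    (hbd : ∀ f ∈ V, ∃ C : ℝ, ∀ y, |f y| ≤ C)
    (h1 : (fun _ => (1 : ℝ)) ∈ V)
    (haddV : ∀ f ∈ V, ∀ g ∈ V, f + g ∈ V)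
    (hsmulV : ∀ (c : ℝ), ∀ f ∈ V, c • f ∈ V)
    (hmaxV : ∀ f ∈ V, ∀ g ∈ V, f ⊔ g ∈ V)
    (hmin1V : ∀ f ∈ V, f ⊓ (fun _ => (1 : ℝ)) ∈ V)
    (hLadd : ∀ f ∈ V, ∀ g ∈ V, L (f + g) = L f + L g)
    (hLsmul : ∀ (c : ℝ), ∀ f ∈ V, L (c • f) = c * L f)
    (hLpos : ∀ f ∈ V, (∀ y, 0 ≤ f y) → 0 ≤ L f)
    (hL1 : 0 < L (fun _ => (1 : ℝ)))
    (hLcont : ∀ g : ℕ → Y → ℝ, (∀ n, g n ∈ V) →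
      (∀ y, Antitone fun n => g n y) →
      (∀ y, Filter.Tendsto (fun n => g n y) Filter.atTop (nhds 0)) →
      Filter.Tendsto (fun n => L (g n)) Filter.atTop (nhds 0)) :
    letI m : MeasurableSpace Y := ⨆ f ∈ V, MeasurableSpace.comap f (borel ℝ)
    ∃ μ : Measure Y, IsProbabilityMeasure μ ∧
      ∀ f ∈ V, L f = L (fun _ => (1 : ℝ)) * ∫ y, f y ∂μ :=
  stmt19_general V L hbd h1 haddV hsmulV hmaxV hLadd hLsmul hLpos hL1 hLcont
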